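/- Let μ and ν be probability distributions on a finite set with densities p and q. The function D ↦ ∑ᵢ [pᵢ log D(i) + qᵢ log(1 − D(i))] over all D : support → (0,1) is uniquely maximized by D*(i) = pᵢ/(pᵢ + qᵢ) (on points where pᵢ + qᵢ > 0), and the maximum value equals 2·JSD(p‖q) − 2 log 2. -/

import Mathlib

/-- The Kullback–Leibler divergence on a finite set. -/
noncomputable def KLdiv {α : Type*} [Fintype α] (p q : α → ℝ) : ℝ :=
  ∑ i, p i * Real.log (p i / q i)

/-- The Jensen–Shannon divergence: `JSD(p‖q) = ½ KL(p‖m) + ½ KL(q‖m)`, `m = (p+q)/2`. -/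
noncomputable def JSD {α : Type*} [Fintype α] (p q : α → ℝ) : ℝ :=
  (1 / 2) * KLdiv p (fun i => (p i + q i) / 2) + (1 / 2) * KLdiv q (fun i => (p i + q i) / 2)

/-!
Pointwise, with `s = a + b > 0`, the gap between `a log (a/s) + b log (b/s)` and
`a log D + b log (1 - D)` is `sD · klFun (a/(sD)) + s(1-D) · klFun (b/(s(1-D)))`; since
`klFun x = x log x + 1 - x` is nonnegative and vanishes only at `x = 1`, this gap is nonnegative and
vanishes only at `D = a/s`. Summing over the finite set gives
the bound and its equality case; halving the mixture `p + q` inside the two KL divergences of the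
JSD costs `log 2` each, which is how the maximum becomes `2 JSD(p‖q) − 2 log 2`.
-/

open Real InformationTheory

lemma mul_log_div_eq_mul_klFun {a c : ℝ} (hc : c ≠ 0) :
    a * log (a / c) = c * klFun (a / c) + a - c := by
  rw [klFun_apply]
  field_simp
  ring

lemma mul_log_div_sub_mul_log {a c D : ℝ} (hc : c ≠ 0) (hD : D ≠ 0) :
    a * log (a / c) - a * log D = a * log (a / (c * D)) := by
  rcases eq_or_ne a 0 with rfl | ha
  · simp
  · rw [← div_div, log_div (div_ne_zero ha hc) hD, mul_sub]

lemma mul_klFun_div_nonneg {a c : ℝ} (ha : 0 ≤ a) (hc : 0 ≤ c) : 0 ≤ c * klFun (a / c) :=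
  mul_nonneg hc (klFun_nonneg (div_nonneg ha hc))

lemma mul_log_one_sub_div_add {a b : ℝ} (ha : 0 ≤ a) (hb : 0 ≤ b) :
    b * log (1 - a / (a + b)) = b * log (b / (a + b)) := by
  rcases (add_nonneg ha hb).eq_or_lt with hs | hs
  · obtain rfl : b = 0 := by linarith
    simp
  · rw [one_sub_div hs.ne', add_sub_cancel_left]

lemma mul_log_add_mul_log_one_sub_gap {a b D : ℝ} (hs : 0 < a + b) (hD : D ∈ Set.Ioo (0 : ℝ) 1) :
    a * log (a / (a + b)) + b * log (b / (a + b)) - (a * log D + b * log (1 - D)) =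
      (a + b) * D * klFun (a / ((a + b) * D)) +
        (a + b) * (1 - D) * klFun (b / ((a + b) * (1 - D))) := by
  obtain ⟨hD0, hD1⟩ := hD
  have hsD : (a + b) * D ≠ 0 := by positivity
  have hsD' : (a + b) * (1 - D) ≠ 0 := mul_ne_zero hs.ne' (by linarith)
  calc _ = (a * log (a / (a + b)) - a * log D) + (b * log (b / (a + b)) - b * log (1 - D)) := by
          ring
    _ = _ := by
      rw [mul_log_div_sub_mul_log hs.ne' hD0.ne', mul_log_div_sub_mul_log hs.ne' (by linarith),
        mul_log_div_eq_mul_klFun hsD, mul_log_div_eq_mul_klFun hsD']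
      ring

lemma mul_log_add_mul_log_one_sub_le {a b D : ℝ} (ha : 0 ≤ a) (hb : 0 ≤ b)
    (hD : D ∈ Set.Ioo (0 : ℝ) 1) :
    a * log D + b * log (1 - D) ≤ a * log (a / (a + b)) + b * log (b / (a + b)) := by
  rcases (add_nonneg ha hb).eq_or_lt with hs | hs
  · obtain ⟨rfl, rfl⟩ : a = 0 ∧ b = 0 := ⟨by linarith, by linarith⟩
    simp
  · have := mul_log_add_mul_log_one_sub_gap hs hD
    have := mul_klFun_div_nonneg ha (mul_pos hs hD.1).le
    have := mul_klFun_div_nonneg hb (mul_pos hs (sub_pos.mpr hD.2)).le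
    linarith

lemma mul_log_add_mul_log_one_sub_eq_iff {a b D : ℝ} (ha : 0 ≤ a) (hb : 0 ≤ b)
    (hD : D ∈ Set.Ioo (0 : ℝ) 1) :
    a * log D + b * log (1 - D) = a * log (a / (a + b)) + b * log (b / (a + b)) ↔
      (0 < a + b → D = a / (a + b)) := by
  rcases (add_nonneg ha hb).eq_or_lt with hs | hs
  · obtain ⟨rfl, rfl⟩ : a = 0 ∧ b = 0 := ⟨by linarith, by linarith⟩
    simp
  simp only [hs, forall_const]
  constructor
  · intro heq
    have hsD : 0 < (a + b) * D := mul_pos hs hD.1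
    have hgap := mul_log_add_mul_log_one_sub_gap hs hD
    have h₁ := mul_klFun_div_nonneg ha hsD.le
    have h₂ := mul_klFun_div_nonneg hb (mul_pos hs (sub_pos.mpr hD.2)).le
    have hzero : klFun (a / ((a + b) * D)) = 0 :=
      (mul_eq_zero.mp (by linarith)).resolve_left hsD.ne'
    rw [klFun_eq_zero_iff (div_nonneg ha hsD.le), div_eq_one_iff_eq hsD.ne'] at hzero
    rw [eq_div_iff hs.ne']
    linarith
  · rintro rfl
    rw [mul_log_one_sub_div_add ha hb]

lemma KLdiv_div_two {α : Type*} [Fintype α] (p r : α → ℝ) (h : ∀ i, p i ≠ 0 → r i ≠ 0) :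
    KLdiv p (fun i => r i / 2) = KLdiv p r + (∑ i, p i) * log 2 := by
  rw [KLdiv, KLdiv, Finset.sum_mul, ← Finset.sum_add_distrib]
  refine Finset.sum_congr rfl fun i _ => ?_
  rcases eq_or_ne (p i) 0 with hp | hp
  · simp [hp]
  · rw [div_div_eq_mul_div, mul_div_right_comm, log_mul (div_ne_zero hp (h i hp)) two_ne_zero]
    ring

lemma two_mul_JSD_sub_two_mul_log_two {α : Type*} [Fintype α] (p q : α → ℝ)
    (hp0 : ∀ i, 0 ≤ p i) (hq0 : ∀ i, 0 ≤ q i) (hp1 : ∑ i, p i = 1) (hq1 : ∑ i, q i = 1) :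
    2 * JSD p q - 2 * log 2 =
      ∑ i, (p i * log (p i / (p i + q i)) + q i * log (q i / (p i + q i))) := by
  have hp : ∀ i, p i ≠ 0 → p i + q i ≠ 0 := fun i hi =>
    (add_pos_of_pos_of_nonneg ((hp0 i).lt_of_ne' hi) (hq0 i)).ne'
  have hq : ∀ i, q i ≠ 0 → p i + q i ≠ 0 := fun i hi =>
    (add_pos_of_nonneg_of_pos (hp0 i) ((hq0 i).lt_of_ne' hi)).ne'
  rw [JSD, KLdiv_div_two p _ hp, KLdiv_div_two q _ hq, hp1, hq1, Finset.sum_add_distrib, KLdiv,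
    KLdiv]
  ring

/-- GAN optimal-discriminator identity: the objective
`D ↦ ∑ᵢ [pᵢ log D(i) + qᵢ log (1 − D(i))]` over `D : α → (0,1)` is uniquely maximized by
`D*(i) = pᵢ / (pᵢ + qᵢ)` (on points where `pᵢ + qᵢ > 0`), and the maximum value equals
`2 JSD(p‖q) − 2 log 2`. -/
theorem stmt14 {α : Type*} [Fintype α] (p q : α → ℝ)
    (hp0 : ∀ i, 0 ≤ p i) (hq0 : ∀ i, 0 ≤ q i)
    (hp1 : ∑ i, p i = 1) (hq1 : ∑ i, q i = 1) :
    (∀ D : α → ℝ, (∀ i, D i ∈ Set.Ioo (0 : ℝ) 1) →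
      (∑ i, (p i * Real.log (D i) + q i * Real.log (1 - D i)) ≤
          2 * JSD p q - 2 * Real.log 2 ∧
        (∑ i, (p i * Real.log (D i) + q i * Real.log (1 - D i)) =
            2 * JSD p q - 2 * Real.log 2 ↔
          ∀ i, 0 < p i + q i → D i = p i / (p i + q i)))) ∧
      ∑ i, (p i * Real.log (p i / (p i + q i)) +
          q i * Real.log (1 - p i / (p i + q i))) =
        2 * JSD p q - 2 * Real.log 2 := by
  rw [two_mul_JSD_sub_two_mul_log_two p q hp0 hq0 hp1 hq1]
  refine ⟨fun D hD => ?_, ?_⟩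
  · have hle : ∀ i ∈ Finset.univ, p i * log (D i) + q i * log (1 - D i) ≤
        p i * log (p i / (p i + q i)) + q i * log (q i / (p i + q i)) :=
      fun i _ => mul_log_add_mul_log_one_sub_le (hp0 i) (hq0 i) (hD i)
    refine ⟨Finset.sum_le_sum hle, ?_⟩
    rw [Finset.sum_eq_sum_iff_of_le hle]
    simp only [Finset.mem_univ, forall_const,
      mul_log_add_mul_log_one_sub_eq_iff (hp0 _) (hq0 _) (hD _)]
  · simp only [mul_log_one_sub_div_add (hp0 _) (hq0 _)]
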